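/- Probability-1 regret guarantee for Hedge: Let K ≥ 2, T ≥ 1 with T > 2·ln K, and set ε = √(ln K / (2T)) (so ε ∈ (0,1/2)). Let c_1,...,c_T ∈ [0,1]^K be arbitrary cost vectors. Define weights w_1(a) = 1 and w_{t+1}(a) = w_t(a)·(1−ε)^{c_t(a)} for all arms a ∈ [K], W_t = Σ_{a∈[K]} w_t(a), and distributions p_t(a) = w_t(a)/W_t. Then Σ_{t=1}^T Σ_{a∈[K]} p_t(a)·c_t(a) − min_{a∈[K]} Σ_{t=1}^T c_t(a) < 2·√(2T·ln K). -/

import Mathlib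

/-!
The potential `Φ t = log (∑ a, w t a)` starts at `log K`. Since `b ^ x` is convex in `x`,
`(1 - ε) ^ x ≤ 1 - ε x` on `[0, 1]`, and with `1 - y ≤ exp (-y)` each round lowers `Φ` by at
least `ε` times the expected cost of that round. On the other hand `Φ T` is at least the log weight
`L * log (1 - ε)` of the best arm, whose total cost is `L`. Hence
`ε · (expected cost) ≤ log K + L · ε / (1 - ε)`, and the choice `ε = √(log K / (2T))` balances
`log K / ε` against `T ε / (1 - ε) < 2 T ε`.
-/

open Finset Real

lemma rpow_le_one_sub_mul {b x : ℝ} (hb : 0 < b) (hx₀ : 0 ≤ x) (hx₁ : x ≤ 1) :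
    b ^ x ≤ 1 - (1 - b) * x := by
  have h := convexOn_exp.2 (Set.mem_univ (log b)) (Set.mem_univ 0)
    hx₀ (show (0 : ℝ) ≤ 1 - x by linarith) (by ring)
  simp only [smul_eq_mul, mul_zero, add_zero, exp_zero, exp_log hb] at h
  rw [rpow_def_of_pos hb, mul_comm]
  linarith

lemma log_sum_mul_rpow_le {α : Type*} [Fintype α] [Nonempty α] {v x : α → ℝ} {ε : ℝ}
    (hε : ε < 1) (hv : ∀ a, 0 < v a) (hx : ∀ a, x a ∈ Set.Icc (0 : ℝ) 1) :
    log (∑ a, v a * (1 - ε) ^ x a)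
      ≤ log (∑ a, v a) - ε * ∑ a, v a / (∑ a', v a') * x a := by
  set W := ∑ a, v a
  set F := ∑ a, v a / W * x a
  have hW : 0 < W := sum_pos (fun a _ => hv a) univ_nonempty
  have hsum : ∑ a, v a * (1 - ε) ^ x a ≤ W * exp (-(ε * F)) :=
    calc ∑ a, v a * (1 - ε) ^ x a ≤ ∑ a, v a * (1 - ε * x a) := by
          refine sum_le_sum fun a _ => mul_le_mul_of_nonneg_left ?_ (hv a).le
          simpa using rpow_le_one_sub_mul (b := 1 - ε) (by linarith) (hx a).1 (hx a).2
      _ = W * (1 - ε * F) := by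
          have hWF : W * F = ∑ a, v a * x a := by
            simp only [F, mul_sum]
            exact sum_congr rfl fun a _ => by field_simp
          rw [mul_sub, mul_one, mul_left_comm, hWF, mul_sum, ← sum_sub_distrib]
          exact sum_congr rfl fun a _ => by ring
      _ ≤ W * exp (-(ε * F)) := by
          gcongr
          linarith [add_one_le_exp (-(ε * F))]
  have hpos : 0 < ∑ a, v a * (1 - ε) ^ x a :=
    sum_pos (fun a _ => mul_pos (hv a) (rpow_pos_of_pos (by linarith) _)) univ_nonempty
  calc log (∑ a, v a * (1 - ε) ^ x a) ≤ log (W * exp (-(ε * F))) := log_le_log hpos hsum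
    _ = log W - ε * F := by rw [log_mul hW.ne' (exp_pos _).ne', log_exp, sub_eq_add_neg]

lemma Fin.sum_univ_sub_telescope {M : Type*} [AddCommGroup M] (f : ℕ → M) (n : ℕ) :
    ∑ i : Fin n, (f (i + 1) - f i) = f n - f 0 := by
  rw [Fin.sum_univ_eq_sum_range (fun i => f (i + 1) - f i), sum_range_sub]

section Hedge

variable {α : Type*} {T : ℕ} {ε : ℝ} {c : Fin T → α → ℝ} {w : ℕ → α → ℝ}

lemma hedge_weight_pos (hε : ε < 1) (hw₀ : ∀ a, 0 < w 0 a)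
    (hw : ∀ (t : Fin T) (a : α), w (t.1 + 1) a = w t.1 a * (1 - ε) ^ (c t a)) :
    ∀ n ≤ T, ∀ a, 0 < w n a := by
  intro n
  induction n with
  | zero => exact fun _ => hw₀
  | succ n ih =>
    intro hn a
    rw [hw ⟨n, hn⟩ a]
    exact mul_pos (ih (by omega) a) (rpow_pos_of_pos (by linarith) _)

lemma log_hedge_weight (hε : ε < 1) (hw₀ : ∀ a, 0 < w 0 a)
    (hw : ∀ (t : Fin T) (a : α), w (t.1 + 1) a = w t.1 a * (1 - ε) ^ (c t a)) (a : α) :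
    log (w T a) = log (w 0 a) + (∑ t, c t a) * log (1 - ε) := by
  have hstep : ∀ t : Fin T, log (w (t.1 + 1) a) - log (w t a) = c t a * log (1 - ε) := by
    intro t
    rw [hw, log_mul (hedge_weight_pos hε hw₀ hw t t.2.le a).ne' (rpow_pos_of_pos (by linarith) _).ne',
      log_rpow (by linarith)]
    ring
  rw [sum_mul, ← sum_congr rfl fun t _ => hstep t, Fin.sum_univ_sub_telescope (fun n => log (w n a))]
  ring

variable [Fintype α]

lemma log_sum_hedge_weight_le [Nonempty α] (hε : ε < 1) (hc : ∀ t a, c t a ∈ Set.Icc (0 : ℝ) 1)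
    (hw₀ : ∀ a, 0 < w 0 a)
    (hw : ∀ (t : Fin T) (a : α), w (t.1 + 1) a = w t.1 a * (1 - ε) ^ (c t a)) :
    log (∑ a, w T a)
      ≤ log (∑ a, w 0 a) - ε * ∑ t : Fin T, ∑ a, w t a / (∑ a', w t a') * c t a := by
  have hstep : ∀ t : Fin T, log (∑ a, w (t.1 + 1) a) - log (∑ a, w t a)
      ≤ -(ε * ∑ a, w t a / (∑ a', w t a') * c t a) := by
    intro t
    simp only [hw t]
    linarith [log_sum_mul_rpow_le hε (hedge_weight_pos hε hw₀ hw t t.2.le) (hc t)]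
  calc log (∑ a, w T a)
      = log (∑ a, w 0 a) + ∑ t : Fin T, (log (∑ a, w (t.1 + 1) a) - log (∑ a, w t a)) := by
        rw [Fin.sum_univ_sub_telescope (fun n => log (∑ a, w n a))]
        ring
    _ ≤ log (∑ a, w 0 a) + ∑ t : Fin T, -(ε * ∑ a, w t a / (∑ a', w t a') * c t a) := by
        gcongr with t
        exact hstep t
    _ = _ := by rw [sum_neg_distrib, ← mul_sum, sub_eq_add_neg]

lemma hedge_regret_le (hε₀ : 0 < ε) (hε₁ : ε < 1) (hc : ∀ t a, c t a ∈ Set.Icc (0 : ℝ) 1)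
    (hw₀ : ∀ a, w 0 a = 1)
    (hw : ∀ (t : Fin T) (a : α), w (t.1 + 1) a = w t.1 a * (1 - ε) ^ (c t a)) (a : α) :
    ∑ t : Fin T, ∑ a', w t a' / (∑ a'', w t a'') * c t a' - ∑ t, c t a
      ≤ log (Fintype.card α) / ε + ε / (1 - ε) * ∑ t, c t a := by
  have : Nonempty α := ⟨a⟩
  have hw₀pos : ∀ a, 0 < w 0 a := fun a => (hw₀ a).symm ▸ one_pos
  have hpos := hedge_weight_pos hε₁ hw₀pos hw T le_rfl
  have hpot := log_sum_hedge_weight_le hε₁ hc hw₀pos hw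
  simp only [hw₀, sum_const, card_univ, nsmul_eq_mul, mul_one] at hpot
  have hbest : log (w T a) ≤ log (∑ a', w T a') :=
    log_le_log (hpos a) (single_le_sum (fun a' _ => (hpos a').le) (mem_univ a))
  rw [log_hedge_weight hε₁ hw₀pos hw, hw₀, log_one, zero_add] at hbest
  have hL : 0 ≤ ∑ t, c t a := sum_nonneg fun t _ => (hc t a).1
  have h1ε : 0 < 1 - ε := by linarith
  have hlog : -log (1 - ε) ≤ ε / (1 - ε) := by
    have h : (1 - ε)⁻¹ - 1 = ε / (1 - ε) := by field_simp; ring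
    linarith [one_sub_inv_le_log_of_pos h1ε]
  have hscaled : ε * ∑ t : Fin T, ∑ a', w t a' / (∑ a'', w t a'') * c t a'
      ≤ log (Fintype.card α) + ε / (1 - ε) * ∑ t, c t a := by
    linarith [mul_le_mul_of_nonneg_left hlog hL]
  have hmul : ε / (1 - ε) * ε = ε / (1 - ε) - ε := by field_simp; ring
  rw [div_add' _ _ _ hε₀.ne', le_div_iff₀ hε₀]
  linear_combination hscaled - (∑ t, c t a) * hmul

end Hedge

section Tuning

variable {k T ε : ℝ}

lemma hedge_learning_rate_mem_Ioo (hk : 0 < k) (hkT : 2 * k < T)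
    (hε : ε = √(k / (2 * T))) : ε ∈ Set.Ioo 0 (1 / 2) := by
  have hT : 0 < T := by linarith
  have hε₀ : 0 < ε := hε ▸ sqrt_pos.2 (by positivity)
  have hε2 : ε ^ 2 < 1 / 4 := by
    rw [hε, sq_sqrt (by positivity), div_lt_iff₀ (by positivity)]
    linarith
  exact ⟨hε₀, by nlinarith⟩

lemma hedge_tuned_bound_lt (hk : 0 < k) (hkT : 2 * k < T) (hε : ε = √(k / (2 * T)))
    {L : ℝ} (hL : L ≤ T) : k / ε + ε / (1 - ε) * L < 2 * √(2 * T * k) := by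
  obtain ⟨hε₀, hε₁⟩ := hedge_learning_rate_mem_Ioo hk hkT hε
  have hT : 0 < T := by linarith
  have hk_eq : k = 2 * T * ε ^ 2 := by
    rw [hε, sq_sqrt (by positivity)]
    field_simp
  have hsqrt : √(2 * T * k) = 2 * T * ε := by
    rw [hk_eq, show 2 * T * (2 * T * ε ^ 2) = (2 * T * ε) ^ 2 by ring, sqrt_sq (by positivity)]
  have hcost : ε / (1 - ε) * L < 2 * T * ε :=
    calc ε / (1 - ε) * L ≤ ε / (1 - ε) * T :=
          mul_le_mul_of_nonneg_left hL (div_nonneg hε₀.le (by linarith))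
      _ < 2 * T * ε := by
          rw [div_mul_eq_mul_div, div_lt_iff₀ (by linarith)]
          nlinarith
  rw [hsqrt, hk_eq, show 2 * T * ε ^ 2 / ε = 2 * T * ε by field_simp]
  linarith

end Tuning

/-- **Probability-1 regret guarantee for Hedge.**
Let `K ≥ 2`, `T ≥ 1` with `T > 2 ln K`, and `ε = √(ln K / (2T))`. For arbitrary cost
vectors `c t ∈ [0,1]^K`, the Hedge weights are `w 0 a = 1` and
`w (t+1) a = w t a · (1-ε)^(c t a)`, with played distributions `p t a = w t a / ∑ a', w t a'`.
Then `∑_t ∑_a p t a · c t a − min_a ∑_t c t a < 2√(2 T ln K)`. -/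
theorem hedge_probability_one_regret (K T : ℕ) (hK : 2 ≤ K)
    (hTK : 2 * Real.log K < T)
    (ε : ℝ) (hε : ε = Real.sqrt (Real.log K / (2 * T)))
    (c : Fin T → Fin K → ℝ) (hc : ∀ t a, c t a ∈ Set.Icc (0 : ℝ) 1)
    (w : ℕ → Fin K → ℝ)
    (hw0 : ∀ a, w 0 a = 1)
    (hw : ∀ (t : Fin T) (a : Fin K), w (t.1 + 1) a = w t.1 a * (1 - ε) ^ (c t a))
    (p : Fin T → Fin K → ℝ)
    (hp : ∀ (t : Fin T) (a : Fin K), p t a = w t.1 a / ∑ a', w t.1 a') :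
    (∑ t : Fin T, ∑ a : Fin K, p t a * c t a)
      - (Finset.univ.inf' ⟨⟨0, by omega⟩, Finset.mem_univ _⟩
          (fun a : Fin K => ∑ t : Fin T, c t a))
      < 2 * Real.sqrt (2 * T * Real.log K) := by
  have hlogK : 0 < log K := log_pos (by exact_mod_cast hK.trans_lt' one_lt_two)
  obtain ⟨hε₀, hε₁⟩ := hedge_learning_rate_mem_Ioo hlogK hTK hε
  obtain ⟨a, -, ha⟩ := exists_mem_eq_inf' ⟨⟨0, by omega⟩, mem_univ _⟩
    (fun a : Fin K => ∑ t : Fin T, c t a)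
  have hL : ∑ t, c t a ≤ T :=
    calc ∑ t, c t a ≤ ∑ _t : Fin T, (1 : ℝ) := sum_le_sum fun t _ => (hc t a).2
      _ = T := by simp
  have hregret := hedge_regret_le hε₀ (by linarith) hc hw0 hw a
  rw [Fintype.card_fin] at hregret
  simp only [hp, ha]
  linarith [hedge_tuned_bound_lt hlogK hTK hε hL]
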